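/- arXiv:2302.10060 — 3 statements merged into one kernel-verified Lean document; each statement's English description precedes it below -/
import Mathlib

section
/- For every binary word w and every integer k ≥ 1, one has 2·ρ(w·0^k·1) = ρ(w) + ρ(w·0^{k−1}·1) in ℚ. (This is Case 1 of the proposition that the dyadic rationals a, b, c of the three regions around any bifurcation of a binary tree satisfy 2b = a + c.) -/
/-- `ρ(a₁ ⋯ aₙ) = Σ_{i=1}^n aᵢ / 2^i`, defined recursively on the binary word. -/
def rho : List Bool → ℚ
  | [] => 0
  | a :: t => ((if a then 1 else 0) + rho t) / 2

theorem rho_append (w v : List Bool) : rho (w ++ v) = rho w + rho v / 2 ^ w.length := by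
  induction w with
  | nil => simp [rho]
  | cons a t ih => simp only [List.cons_append, rho, ih, List.length_cons]; ring

theorem rho_false_cons (v : List Bool) : rho (false :: v) = rho v / 2 := by
  simp [rho]

/-- Inserting a `0` after `w` halves the contribution of the rest of the word. -/
theorem two_mul_rho_append_false_cons (w v : List Bool) :
    2 * rho (w ++ false :: v) = rho w + rho (w ++ v) := by
  rw [rho_append, rho_append, rho_false_cons]
  ring

/-- For every binary word `w` and every integer `k ≥ 1`,
`2 · ρ(w · 0^k · 1) = ρ(w) + ρ(w · 0^{k−1} · 1)`. -/
theorem two_mul_rho_append_zeros_one (w : List Bool) (k : ℕ) (hk : 1 ≤ k) :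
    2 * rho (w ++ List.replicate k false ++ [true]) =
      rho w + rho (w ++ List.replicate (k - 1) false ++ [true]) := by
  obtain ⟨m, rfl⟩ := Nat.exists_eq_add_of_le' hk
  simpa only [List.replicate_succ, List.append_assoc, List.cons_append, Nat.add_sub_cancel]
    using two_mul_rho_append_false_cons w (List.replicate m false ++ [true])
end

section
/- Let S be a complete prefix code with lexicographic enumeration u₀ < u₁ < ⋯ < u_{n−1}. Then ρ(u₀) = 0, ρ(u_{i+1}) = ρ(u_i) + 2^{−|u_i|} for every 0 ≤ i ≤ n−2, and ρ(u_{n−1}) + 2^{−|u_{n−1}|} = 1. (The leaves of a binary tree, listed left to right, correspond to a subdivision of [0,1] into standard dyadic intervals whose left endpoints are the ρ-values of the leaves.) -/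
theorem rho_nonneg (u : List Bool) : 0 ≤ rho u := by
  induction u with
  | nil => rfl
  | cons a t ih => cases a <;> simp only [rho] <;> positivity

theorem rho_add_pow_le_one (u : List Bool) : rho u + (2⁻¹ : ℚ) ^ u.length ≤ 1 := by
  induction u with
  | nil => simp [rho]
  | cons a t ih => cases a <;> simp only [rho, List.length_cons, pow_succ] <;> norm_num <;> linarith

theorem rho_add_pow_le_rho_of_lt_of_not_prefix {u v : List Bool} (hlt : u < v)
    (hpre : ¬ u <+: v) : rho u + (2⁻¹ : ℚ) ^ u.length ≤ rho v := by
  induction u generalizing v with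
  | nil => exact absurd List.nil_prefix hpre
  | cons a u ih =>
    cases v with
    | nil => cases hlt
    | cons b v =>
      cases hlt with
      | rel hab =>
        obtain ⟨rfl, rfl⟩ := Bool.lt_iff.mp hab
        have := rho_add_pow_le_one u
        have := rho_nonneg v
        simp only [rho, List.length_cons, pow_succ]
        norm_num
        linarith
      | cons htail =>
        have := ih htail fun h => hpre (List.cons_prefix_cons.mpr ⟨rfl, h⟩)
        simp only [rho, List.length_cons, pow_succ]
        linarith

theorem List.sum_map_eq_sum_range_getD {α β : Type*} [AddCommMonoid β] (L : List α)
    (f : α → β) (d : α) : (L.map f).sum = ∑ i ∈ Finset.range L.length, f (L.getD i d) := by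
  induction L with
  | nil => simp
  | cons a t ih => simp [Finset.sum_range_succ', ih, add_comm]

theorem add_sum_range_add_sum_gaps {α : Type*} [AddCommGroup α] (a w : ℕ → α) (m : ℕ) :
    a 0 + ∑ i ∈ Finset.range (m + 1), w i + ∑ i ∈ Finset.range m, (a (i + 1) - a i - w i)
      = a m + w m := by
  induction m with
  | zero => simp
  | succ m ih =>
    rw [Finset.sum_range_succ w (m + 1), Finset.sum_range_succ (fun i => a (i + 1) - a i - w i) m,
      ← sub_eq_zero, ← sub_eq_zero.mpr ih]
    abel

theorem tiling_of_ordered_packing {α : Type*} [Field α] [LinearOrder α] [IsStrictOrderedRing α]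
    {a w : ℕ → α} {m : ℕ}
    (hfirst : 0 ≤ a 0) (hstep : ∀ i < m, a i + w i ≤ a (i + 1)) (hlast : a m + w m ≤ 1)
    (hsum : ∑ i ∈ Finset.range (m + 1), w i = 1) :
    a 0 = 0 ∧ (∀ i < m, a (i + 1) = a i + w i) ∧ a m + w m = 1 := by
  have hgap : ∀ i ∈ Finset.range m, 0 ≤ a (i + 1) - a i - w i := fun i hi =>
    sub_nonneg.mpr (le_sub_iff_add_le'.mpr (hstep i (Finset.mem_range.mp hi)))
  have hgaps := Finset.sum_nonneg hgap
  have hid := add_sum_range_add_sum_gaps a w m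
  have hzero : ∑ i ∈ Finset.range m, (a (i + 1) - a i - w i) = 0 := by linarith
  refine ⟨by linarith, fun i hi => ?_, by linarith⟩
  have := (Finset.sum_eq_zero_iff_of_nonneg hgap).mp hzero i (Finset.mem_range.mpr hi)
  linear_combination this

theorem rho_getD_add_pow_le_rho_getD_succ {L : List (List Bool)}
    (hsorted : L.Pairwise (· < ·)) (hprefixfree : ∀ u ∈ L, ∀ v ∈ L, u ≠ v → ¬ u <+: v) {i : ℕ}
    (hi : i + 1 < L.length) :
    rho (L.getD i []) + (2⁻¹ : ℚ) ^ (L.getD i []).length ≤ rho (L.getD (i + 1) []) := by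
  have hi' : i < L.length := by omega
  rw [List.getD_eq_getElem L [] hi', List.getD_eq_getElem L [] hi]
  have hlt : L[i] < L[i + 1] := List.pairwise_iff_getElem.mp hsorted i (i + 1) hi' hi i.lt_succ_self
  exact rho_add_pow_le_rho_of_lt_of_not_prefix hlt
    (hprefixfree _ (L.getElem_mem hi') _ (L.getElem_mem hi) hlt.ne)

theorem rho_of_complete_prefix_code_general (L : List (List Bool))
    (hsorted : L.Pairwise (· < ·))
    (hprefixfree : ∀ u ∈ L, ∀ v ∈ L, u ≠ v → ¬ u <+: v)
    (hsum : (L.map fun u => ((2 : ℚ)⁻¹) ^ u.length).sum = 1) :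
    rho (L.getD 0 []) = 0 ∧
      (∀ i : ℕ, i + 1 < L.length →
        rho (L.getD (i + 1) []) = rho (L.getD i []) + ((2 : ℚ)⁻¹) ^ (L.getD i []).length) ∧
      rho (L.getD (L.length - 1) []) + ((2 : ℚ)⁻¹) ^ (L.getD (L.length - 1) []).length = 1 := by
  obtain ⟨m, hm⟩ : ∃ m, L.length = m + 1 := by
    refine Nat.exists_eq_succ_of_ne_zero fun h => ?_
    simp [List.length_eq_zero_iff.mp h] at hsum
  obtain ⟨hfirst, hstep, hlast⟩ :=
    tiling_of_ordered_packing (a := fun i => rho (L.getD i [])) (m := m) (rho_nonneg _)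
      (fun i hi => rho_getD_add_pow_le_rho_getD_succ hsorted hprefixfree (by omega))
      (rho_add_pow_le_one _) (by rw [← hm, ← hsum, List.sum_map_eq_sum_range_getD _ _ []])
  rw [hm, Nat.add_sub_cancel]
  exact ⟨hfirst, fun i hi => hstep i (by omega), hlast⟩

/-- Let `S` be a complete prefix code, presented as the list `L` of its elements in
(strictly increasing) lexicographic order: `L` is nonempty, sorted, prefix-free, and
`Σ_{u ∈ L} 2^{−|u|} = 1`.  Then `ρ(u₀) = 0`, `ρ(u_{i+1}) = ρ(u_i) + 2^{−|u_i|}` for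
`0 ≤ i ≤ n−2`, and `ρ(u_{n−1}) + 2^{−|u_{n−1}|} = 1`. -/
theorem rho_of_complete_prefix_code (L : List (List Bool)) (hne : L ≠ [])
    (hsorted : L.Pairwise (· < ·))
    (hprefixfree : ∀ u ∈ L, ∀ v ∈ L, u ≠ v → ¬ u <+: v)
    (hsum : (L.map fun u => ((2 : ℚ)⁻¹) ^ u.length).sum = 1) :
    rho (L.getD 0 []) = 0 ∧
      (∀ i : ℕ, i + 1 < L.length →
        rho (L.getD (i + 1) []) = rho (L.getD i []) + ((2 : ℚ)⁻¹) ^ (L.getD i []).length) ∧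
      rho (L.getD (L.length - 1) []) + ((2 : ℚ)⁻¹) ^ (L.getD (L.length - 1) []).length = 1 :=
  rho_of_complete_prefix_code_general L hsorted hprefixfree hsum
end

section
/- Let q ≥ 1 be an integer and let S be a complete prefix code such that the length of every element of S is a positive multiple of q. Then there exist N ≥ 0 and a sequence of complete prefix codes C₀, C₁, …, C_N such that C₀ is the set of all binary words of length q, C_N = S, and for each j there is some u ∈ C_j with C_{j+1} = (C_j \ {u}) ∪ {u·v : v a binary word of length q}. (Every binary tree all of whose leaf lengths are positive multiples of q is obtained by attaching copies of the complete binary tree T_q of depth q.) -/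
/-- The finite set of all binary words of length `n`. -/
def wordsOfLength : ℕ → Finset (List Bool)
  | 0 => {[]}
  | n + 1 => (wordsOfLength n).image (List.cons false) ∪ (wordsOfLength n).image (List.cons true)

/-- A complete prefix code: a finite nonempty set `S` of binary words such that no element
is a (proper) prefix of another and `Σ_{u ∈ S} 2^{−|u|} = 1`. -/
def IsCompletePrefixCode (S : Finset (List Bool)) : Prop :=
  S.Nonempty ∧ (∀ u ∈ S, ∀ v ∈ S, u ≠ v → ¬ u <+: v) ∧
    ∑ u ∈ S, ((2 : ℚ)⁻¹) ^ u.length = 1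

/-!
Induct on `|S|`. If `S` is not the full level `{0,1}^q`, let `u ∈ S` be a longest word and `w`
its prefix of length `|u| - q`. Since all lengths are multiples of `q` and `S` is complete,
every `w·v` with `|v| = q` lies in `S`; replacing these `2^q` words by `w` gives a smaller
complete prefix code `S'` with the same length condition, and `S` is the expansion of `S'`
at `w`.
-/

open Finset

@[simp]
lemma mem_wordsOfLength {n : ℕ} {x : List Bool} : x ∈ wordsOfLength n ↔ x.length = n := by
  induction n generalizing x with
  | zero => simp [wordsOfLength, List.length_eq_zero_iff]
  | succ n ih =>
    cases x with
    | nil => simp [wordsOfLength]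
    | cons b t => cases b <;> simp [wordsOfLength, ih]

lemma card_wordsOfLength (n : ℕ) : #(wordsOfLength n) = 2 ^ n := by
  induction n with
  | zero => rfl
  | succ n ih =>
    have hdisj : Disjoint ((wordsOfLength n).image (List.cons false))
        ((wordsOfLength n).image (List.cons true)) := by
      simp only [disjoint_left, mem_image]
      rintro _ ⟨x, -, rfl⟩ ⟨y, -, h⟩
      simp at h
    rw [wordsOfLength, card_union_of_disjoint hdisj, card_image_of_injective _ List.cons_injective,
      card_image_of_injective _ List.cons_injective, ih, pow_succ, mul_two]

def graft (n : ℕ) (u : List Bool) : Finset (List Bool) :=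
  (wordsOfLength n).image (u ++ ·)

lemma mem_graft {n : ℕ} {u x : List Bool} :
    x ∈ graft n u ↔ u <+: x ∧ x.length = u.length + n := by
  constructor
  · simp only [graft, mem_image, mem_wordsOfLength]
    rintro ⟨v, hv, rfl⟩
    exact ⟨List.prefix_append u v, by rw [List.length_append, hv]⟩
  · rintro ⟨⟨v, rfl⟩, hlen⟩
    simp only [List.length_append, Nat.add_left_cancel_iff] at hlen
    exact mem_image.2 ⟨v, mem_wordsOfLength.2 hlen, rfl⟩

lemma card_graft (n : ℕ) (u : List Bool) : #(graft n u) = 2 ^ n := by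
  rw [graft, card_image_of_injective _ (List.append_right_injective u), card_wordsOfLength]

lemma sum_graft (n : ℕ) (u : List Bool) :
    ∑ x ∈ graft n u, (2⁻¹ : ℚ) ^ x.length = (2⁻¹) ^ u.length := by
  rw [sum_congr rfl fun x hx => by rw [(mem_graft.1 hx).2], sum_const, card_graft, nsmul_eq_mul,
    pow_add, Nat.cast_pow, Nat.cast_ofNat, mul_left_comm, ← mul_pow, mul_inv_cancel₀ two_ne_zero,
    one_pow, mul_one]

def expandAt (q : ℕ) (C : Finset (List Bool)) (u : List Bool) : Finset (List Bool) :=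
  (C \ {u}) ∪ graft q u

def contractAt (q : ℕ) (S : Finset (List Bool)) (w : List Bool) : Finset (List Bool) :=
  insert w (S \ graft q w)

namespace IsCompletePrefixCode

variable {S : Finset (List Bool)}

lemma eq_of_isPrefix (hS : IsCompletePrefixCode S) {a b z : List Bool} (ha : a ∈ S) (hb : b ∈ S)
    (haz : a <+: z) (hbz : b <+: z) : a = b := by
  by_contra hab
  rcases le_total a.length b.length with hle | hle
  · exact hS.2.1 a ha b hb hab (List.prefix_of_prefix_length_le haz hbz hle)
  · exact hS.2.1 b hb a ha (Ne.symm hab) (List.prefix_of_prefix_length_le hbz haz hle)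

lemma sum_two_pow_sub_length (hS : IsCompletePrefixCode S) {L : ℕ}
    (hL : ∀ s ∈ S, s.length ≤ L) : ∑ s ∈ S, 2 ^ (L - s.length) = 2 ^ L := by
  have hterm : ∀ s ∈ S, (2 : ℚ) ^ (L - s.length) = 2 ^ L * (2⁻¹) ^ s.length := fun s hs => by
    rw [pow_sub₀ _ two_ne_zero (hL s hs), inv_pow]
  have hsum : ((∑ s ∈ S, 2 ^ (L - s.length) : ℕ) : ℚ) = 2 ^ L := by
    push_cast
    rw [sum_congr rfl hterm, ← mul_sum, hS.2.2, mul_one]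
  exact_mod_cast hsum

/-- The extensions of the codewords to length `|x|` are pairwise disjoint and, by Kraft's
equality, `2 ^ |x|` in number, so they exhaust all words of that length. -/
lemma exists_isPrefix (hS : IsCompletePrefixCode S) {x : List Bool}
    (hx : ∀ s ∈ S, s.length ≤ x.length) : ∃ s ∈ S, s <+: x := by
  set L := x.length
  let T := S.biUnion fun s => graft (L - s.length) s
  have hT : T ⊆ wordsOfLength L := by
    intro y hy
    obtain ⟨s, hs, hy⟩ := mem_biUnion.1 hy
    rw [mem_wordsOfLength, (mem_graft.1 hy).2]
    have := hx s hs
    omega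
  have hcard : #T = 2 ^ L := by
    rw [card_biUnion, sum_congr rfl fun s _ => card_graft _ s, hS.sum_two_pow_sub_length hx]
    intro s hs t ht hst
    refine disjoint_left.2 fun y hys hyt => hst ?_
    exact hS.eq_of_isPrefix hs ht (mem_graft.1 hys).1 (mem_graft.1 hyt).1
  have hxT : x ∈ T := by
    rw [eq_of_subset_of_card_le hT (by rw [hcard, card_wordsOfLength])]
    exact mem_wordsOfLength.2 rfl
  obtain ⟨s, hs, hxs⟩ := mem_biUnion.1 hxT
  exact ⟨s, hs, (mem_graft.1 hxs).1⟩

lemma eq_wordsOfLength (hS : IsCompletePrefixCode S) {n : ℕ} (hn : ∀ s ∈ S, s.length = n) :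
    S = wordsOfLength n := by
  ext x
  refine ⟨fun hx => mem_wordsOfLength.2 (hn x hx), fun hx => ?_⟩
  rw [mem_wordsOfLength] at hx
  obtain ⟨s, hs, hsx⟩ := hS.exists_isPrefix (x := x) fun s hs => (hn s hs).trans hx.symm |>.le
  rwa [← hsx.eq_of_length ((hn s hs).trans hx.symm)]

lemma graft_subset (hS : IsCompletePrefixCode S) {q : ℕ} {w : List Bool}
    (hmax : ∀ s ∈ S, s.length ≤ w.length + q)
    (hgap : ∀ s ∈ S, s.length ≤ w.length ∨ s.length = w.length + q)
    (hw : ∀ s ∈ S, ¬ s <+: w) : graft q w ⊆ S := by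
  intro x hx
  rw [mem_graft] at hx
  obtain ⟨s, hs, hsx⟩ := hS.exists_isPrefix (x := x) fun s hs => hx.2 ▸ hmax s hs
  rcases hgap s hs with hle | heq
  · exact absurd (List.prefix_of_prefix_length_le hsx hx.1 hle) (hw s hs)
  · rwa [← hsx.eq_of_length (heq.trans hx.2.symm)]

/-- `w` is the prefix of length `|u| - q` of a longest codeword `u`. -/
lemma exists_graft_subset {q : ℕ} (hS : IsCompletePrefixCode S)
    (hlen : ∀ u ∈ S, ∃ k : ℕ, 0 < k ∧ u.length = k * q)
    (hne : S ≠ wordsOfLength q) :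
    q ≠ 0 ∧ ∃ w : List Bool, (∃ k : ℕ, 0 < k ∧ w.length = k * q) ∧ graft q w ⊆ S := by
  obtain ⟨u, hu, hmax⟩ := S.exists_max_image List.length hS.1
  obtain ⟨k, hk, hku⟩ := hlen u hu
  have hlong : q < u.length := by
    by_contra! h
    refine hne (hS.eq_wordsOfLength fun s hs => ?_)
    obtain ⟨k', hk', hs'⟩ := hlen s hs
    have := hmax s hs
    have := Nat.le_mul_of_pos_left q hk'
    omega
  have hq : q ≠ 0 := by
    rintro rfl
    simp [hku] at hlong
  have hk2 : 1 < k := Nat.lt_of_mul_lt_mul_right (a := q) (by omega)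
  set w := u.take ((k - 1) * q)
  have hwu : w <+: u := List.take_prefix _ _
  have hwlen : w.length = (k - 1) * q := by
    rw [List.length_take, hku, min_eq_left (Nat.mul_le_mul_right _ (Nat.sub_le _ _))]
  have hw : w.length + q = u.length := by
    rw [hwlen, hku, Nat.sub_one_mul]
    have := Nat.le_mul_of_pos_left q hk
    omega
  refine ⟨hq, w, ⟨k - 1, by omega, hwlen⟩, ?_⟩
  refine hS.graft_subset (fun s hs => hw ▸ hmax s hs) (fun s hs => ?_) fun s hs hsw => ?_
  · obtain ⟨k', -, hs'⟩ := hlen s hs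
    have hk' : k' ≤ k := Nat.le_of_mul_le_mul_right (hs' ▸ hku ▸ hmax s hs) (by omega)
    rcases hk'.eq_or_lt with rfl | hlt
    · exact Or.inr (by omega)
    · exact Or.inl (hs' ▸ hwlen ▸ Nat.mul_le_mul_right q (Nat.le_sub_one_of_lt hlt))
  · have := hsw.length_le
    exact hS.2.1 s hs u hu (by rintro rfl; omega) (hsw.trans hwu)

variable {q : ℕ} {w a : List Bool}

lemma not_isPrefix_root_of_notMem_graft (hS : IsCompletePrefixCode S) (hw : graft q w ⊆ S)
    (ha : a ∈ S) (haw : a ∉ graft q w) : ¬ a <+: w := by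
  intro h
  have hx : w ++ List.replicate q false ∈ graft q w := mem_graft.2 ⟨List.prefix_append _ _, by simp⟩
  have := hS.eq_of_isPrefix ha (hw hx) (h.trans (List.prefix_append _ _)) (List.prefix_refl _)
  exact haw (this ▸ hx)

lemma not_root_isPrefix_of_notMem_graft (hS : IsCompletePrefixCode S) (hw : graft q w ⊆ S)
    (ha : a ∈ S) (haw : a ∉ graft q w) : ¬ w <+: a := by
  rintro ⟨t, rfl⟩
  have hx : w ++ (t ++ List.replicate q false).take q ∈ graft q w :=
    mem_graft.2 ⟨List.prefix_append _ _, by simp⟩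
  have := hS.eq_of_isPrefix ha (hw hx) ((List.prefix_append_right_inj w).2 (List.prefix_append _ _))
    ((List.prefix_append_right_inj w).2 (List.take_prefix _ _))
  exact haw (this ▸ hx)

lemma root_notMem_sdiff_graft (hS : IsCompletePrefixCode S) (hw : graft q w ⊆ S) :
    w ∉ S \ graft q w := fun h =>
  hS.not_isPrefix_root_of_notMem_graft hw (mem_sdiff.1 h).1 (mem_sdiff.1 h).2 (List.prefix_refl w)

lemma card_contractAt_lt (hS : IsCompletePrefixCode S) (hq : q ≠ 0) (hw : graft q w ⊆ S) :
    #(contractAt q S w) < #S := by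
  have hle := card_le_card hw
  rw [card_graft] at hle
  rw [contractAt, card_insert_of_notMem (hS.root_notMem_sdiff_graft hw), card_sdiff_of_subset hw,
    card_graft]
  have := Nat.one_lt_two_pow hq
  omega

lemma expandAt_contractAt (hS : IsCompletePrefixCode S) (hw : graft q w ⊆ S) :
    expandAt q (contractAt q S w) w = S := by
  rw [expandAt, contractAt, sdiff_singleton_eq_erase, erase_insert (hS.root_notMem_sdiff_graft hw),
    sdiff_union_of_subset hw]

lemma contractAt (hS : IsCompletePrefixCode S) (hw : graft q w ⊆ S) :
    IsCompletePrefixCode (contractAt q S w) := by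
  refine ⟨insert_nonempty _ _, ?_, ?_⟩
  · simp only [_root_.contractAt, mem_insert, mem_sdiff]
    rintro a (rfl | ⟨ha, haw⟩) b (rfl | ⟨hb, hbw⟩) hab
    · exact absurd rfl hab
    · exact hS.not_root_isPrefix_of_notMem_graft hw hb hbw
    · exact hS.not_isPrefix_root_of_notMem_graft hw ha haw
    · exact hS.2.1 a ha b hb hab
  · rw [_root_.contractAt, sum_insert (hS.root_notMem_sdiff_graft hw), sum_sdiff_eq_sub hw,
      sum_graft, hS.2.2]
    ring

end IsCompletePrefixCode

lemma exists_chain_snoc {α : Type*} {p : α → Prop} {r : α → α → Prop} {N : ℕ} {C : ℕ → α} {b : α}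
    (hC : ∀ j ≤ N, p (C j)) (hr : ∀ j < N, r (C j) (C (j + 1))) (hb : p b) (hN : r (C N) b) :
    ∃ C' : ℕ → α, (∀ j ≤ N + 1, p (C' j)) ∧ C' 0 = C 0 ∧ C' (N + 1) = b ∧
      ∀ j < N + 1, r (C' j) (C' (j + 1)) := by
  refine ⟨fun j => if j ≤ N then C j else b, fun j _ => ?_, by simp, by simp, fun j hj => ?_⟩
  · dsimp only
    split_ifs with h
    exacts [hC j h, hb]
  · rcases Nat.lt_or_ge j N with h | h
    · simpa [h.le, Nat.succ_le_of_lt h] using hr j h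
    · obtain rfl : j = N := by omega
      simpa using hN

theorem exists_chain_of_q_ary_expansions_general (q : ℕ)
    (S : Finset (List Bool)) (hS : IsCompletePrefixCode S)
    (hlen : ∀ u ∈ S, ∃ k : ℕ, 0 < k ∧ u.length = k * q) :
    ∃ (N : ℕ) (C : ℕ → Finset (List Bool)),
      (∀ j ≤ N, IsCompletePrefixCode (C j)) ∧
      C 0 = wordsOfLength q ∧
      C N = S ∧
      ∀ j < N, ∃ u ∈ C j,
        C (j + 1) = (C j \ {u}) ∪ (wordsOfLength q).image (fun v => u ++ v) := by
  induction hn : #S using Nat.strong_induction_on generalizing S with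
  | _ n ih =>
    by_cases hSq : S = wordsOfLength q
    · exact ⟨0, fun _ => S, fun _ _ => hS, hSq, rfl, fun _ h => absurd h (Nat.not_lt_zero _)⟩
    obtain ⟨hq, w, hw, hsub⟩ := hS.exists_graft_subset hlen hSq
    have hlen' : ∀ u ∈ contractAt q S w, ∃ k : ℕ, 0 < k ∧ u.length = k * q := fun u hu =>
      (mem_insert.1 hu).elim (· ▸ hw) fun h => hlen u (mem_sdiff.1 h).1
    obtain ⟨N, C, hC, hC0, hCN, hstep⟩ :=
      ih _ (hn ▸ hS.card_contractAt_lt hq hsub) _ (hS.contractAt hsub) hlen' rfl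
    obtain ⟨C', hC', hC'0, hC'N, hstep'⟩ :=
      exists_chain_snoc (r := fun A B => ∃ u ∈ A, B = expandAt q A u) hC hstep hS
        ⟨w, hCN ▸ mem_insert_self _ _, by rw [hCN, hS.expandAt_contractAt hsub]⟩
    exact ⟨N + 1, C', hC', hC'0.trans hC0, hC'N, hstep'⟩

/-- Let `q ≥ 1` and let `S` be a complete prefix code all of whose elements have length a
positive multiple of `q`.  Then there are `N ≥ 0` and complete prefix codes
`C₀, C₁, …, C_N` such that `C₀` is the set of all binary words of length `q`, `C_N = S`,
and each `C_{j+1}` is obtained from `C_j` by replacing some `u ∈ C_j` with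
`{u·v : |v| = q}` (attaching a copy of the complete binary tree of depth `q`). -/
theorem exists_chain_of_q_ary_expansions (q : ℕ) (hq : 1 ≤ q)
    (S : Finset (List Bool)) (hS : IsCompletePrefixCode S)
    (hlen : ∀ u ∈ S, ∃ k : ℕ, 0 < k ∧ u.length = k * q) :
    ∃ (N : ℕ) (C : ℕ → Finset (List Bool)),
      (∀ j ≤ N, IsCompletePrefixCode (C j)) ∧
      C 0 = wordsOfLength q ∧
      C N = S ∧
      ∀ j < N, ∃ u ∈ C j,
        C (j + 1) = (C j \ {u}) ∪ (wordsOfLength q).image (fun v => u ++ v) :=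
  exists_chain_of_q_ary_expansions_general q S hS hlen
end
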